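/- Fix integers r ≥ 1 and t ≥ 2. If s ≥ rt, then the number of t-cores in Par_{r,s} equals the binomial coefficient C(r+t−1, r). -/

import Mathlib

/-!
The beta-set map identifies partitions in the `r × s` rectangle with the `r`-element subsets of
`{0, …, r + s − 1}`, and `λ` is a `t`-core exactly when `β(λ)` is closed under `b ↦ b − t`. Such a
set meets each residue class `i` mod `t` in an initial segment `{i, i + t, …, i + (a_i − 1) t}`, so
it is determined by the vector `(a_i)`, with `∑ a_i = r`; its elements are then `< r t ≤ s`, so
every such vector comes from a `t`-core in the rectangle, and stars and bars counts the vectors.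
-/

open Finset

/-- Partitions in the `r × s` rectangle: weakly decreasing `r`-tuples with parts at most `s`. -/
def IsRectPartition (r s : ℕ) (lam : Fin r → ℕ) : Prop :=
  (∀ i j : Fin r, i ≤ j → lam j ≤ lam i) ∧ ∀ i, lam i ≤ s

/-- The beta-set `β(λ) = {λ_i + r − i : 1 ≤ i ≤ r}` (with 0-indexed `i`). -/
def betaSet (r : ℕ) (lam : Fin r → ℕ) : Finset ℕ :=
  Finset.image (fun i : Fin r => lam i + (r - 1 - (i : ℕ))) Finset.univ

/-- `λ` is a `t`-core: for every `b ∈ β(λ)` with `b ≥ t`, also `b − t ∈ β(λ)`. -/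
def IsTCore (r t : ℕ) (lam : Fin r → ℕ) : Prop :=
  ∀ b ∈ betaSet r lam, t ≤ b → b - t ∈ betaSet r lam

/-- `n_i = ⌊(r+s+t−1−i)/t⌋`. -/
def nres (r s t i : ℕ) : ℕ := (r + s + t - 1 - i) / t

/-- `a_i(λ) = #{b ∈ β(λ) : b ≡ i (mod t)}`. -/
def aCount (r t : ℕ) (lam : Fin r → ℕ) (i : ℕ) : ℕ :=
  ((betaSet r lam).filter fun b => b % t = i).card

/-- The justification `J(λ)`: in each residue class `i` mod `t`, the `a_i(λ)` smallest
nonnegative integers congruent to `i`. -/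
def justification (r t : ℕ) (lam : Fin r → ℕ) : Finset ℕ :=
  (Finset.range t).biUnion fun i =>
    (Finset.range (aCount r t lam i)).image fun m => i + m * t

/-- The size of the `t`-core of `λ`: `Σ_{b ∈ J(λ)} b − r(r−1)/2`. -/
def coreSize (r t : ℕ) (lam : Fin r → ℕ) : ℕ :=
  (∑ b ∈ justification r t lam, b) - r * (r - 1) / 2

def IsTClosed (t : ℕ) (B : Finset ℕ) : Prop :=
  ∀ b ∈ B, t ≤ b → b - t ∈ B

theorem IsTClosed.sub_mul_mem {t : ℕ} {B : Finset ℕ} (hB : IsTClosed t B) {b k : ℕ}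
    (hb : b ∈ B) (hk : k * t ≤ b) : b - k * t ∈ B := by
  induction k with
  | zero => simpa using hb
  | succ k ih =>
    have hkt : k * t + t ≤ b := by rwa [Nat.succ_mul] at hk
    rw [Nat.succ_mul, ← Nat.sub_sub]
    exact hB _ (ih (by omega)) (by omega)

section Residues

variable {t : ℕ} [NeZero t]

/-- The image of `{(i, m) | m < a i}` under `(i, m) ↦ m * t + i`: the `a i` smallest naturals
in each residue class `i` mod `t`. -/
def residueSet (t : ℕ) [NeZero t] (a : Fin t → ℕ) : Finset ℕ :=
  (univ.sigma fun i => range (a i)).map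
    (((Equiv.sigmaEquivProd (Fin t) ℕ).trans (Equiv.prodComm _ _)).trans
      (Nat.divModEquiv t).symm).toEmbedding

def residueCount (t : ℕ) [NeZero t] (B : Finset ℕ) (i : Fin t) : ℕ :=
  #{b ∈ B | Fin.ofNat t b = i}

theorem mem_residueSet {a : Fin t → ℕ} {b : ℕ} :
    b ∈ residueSet t a ↔ b / t < a (Fin.ofNat t b) := by
  rw [residueSet, mem_map_equiv]
  simp

theorem card_residueSet (a : Fin t → ℕ) : #(residueSet t a) = ∑ i, a i := by
  simp [residueSet]

theorem isTClosed_residueSet (a : Fin t → ℕ) : IsTClosed t (residueSet t a) := by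
  intro b hb htb
  obtain ⟨c, rfl⟩ := Nat.exists_eq_add_of_le' htb
  rw [mem_residueSet] at hb ⊢
  have hc : Fin.ofNat t (c + t) = Fin.ofNat t c := Fin.ext (by simp)
  rw [Nat.add_div_right c (NeZero.pos t), hc] at hb
  simpa using Nat.lt_of_succ_lt hb

theorem residueCount_residueSet (a : Fin t → ℕ) : residueCount t (residueSet t a) = a := by
  funext i
  have hdivMod (m : ℕ) : (m * t + i) / t = m ∧ Fin.ofNat t (m * t + i) = i := by
    simpa using (Nat.divModEquiv t).apply_symm_apply (m, i)
  refine (card_nbij' (· / t) (fun m => m * t + i) ?_ ?_ ?_ ?_).trans (card_range (a i))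
  · intro b hb
    simp only [coe_filter, Set.mem_ofPred_eq, mem_residueSet] at hb
    simpa [← hb.2] using hb.1
  · intro m hm
    simp only [coe_range, Set.mem_Iio] at hm
    simp only [coe_filter, Set.mem_ofPred_eq, mem_residueSet, hdivMod]
    exact ⟨hm, trivial⟩
  · intro b hb
    simp only [coe_filter, Set.mem_ofPred_eq] at hb
    rw [← hb.2]
    simp [Nat.div_add_mod']
  · intro m _
    exact (hdivMod m).1

theorem sum_residueCount (B : Finset ℕ) : ∑ i, residueCount t B i = #B :=
  (card_eq_sum_card_fiberwise fun _ _ => mem_coe.2 (mem_univ _)).symm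

namespace IsTClosed

variable {B : Finset ℕ} (hB : IsTClosed t B)
include hB

theorem div_lt_residueCount {b : ℕ} (hb : b ∈ B) : b / t < residueCount t B (Fin.ofNat t b) := by
  have hmul {k : ℕ} (hk : k ∈ range (b / t + 1)) : k * t ≤ b :=
    (Nat.le_div_iff_mul_le (NeZero.pos t)).1 (Nat.lt_succ_iff.1 (mem_range.1 hk))
  refine (card_range _).symm.trans_le (card_le_card_of_injOn (fun k => b - k * t) ?_ ?_)
  · intro k hk
    simp only [coe_filter, Set.mem_ofPred_eq]
    refine ⟨hB.sub_mul_mem hb (hmul hk), Fin.ext ?_⟩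
    simpa [mul_comm] using Nat.sub_mul_mod (n := t) (mul_comm k t ▸ hmul hk)
  · intro k hk k' hk' h
    have := hmul hk
    have := hmul hk'
    exact Nat.eq_of_mul_eq_mul_right (NeZero.pos t) (by simp only at h; omega)

theorem residueSet_residueCount : residueSet t (residueCount t B) = B := by
  refine (eq_of_subset_of_card_le (fun b hb => ?_) ?_).symm
  · exact mem_residueSet.2 (hB.div_lt_residueCount hb)
  · rw [card_residueSet, sum_residueCount]

theorem lt_card_mul {b : ℕ} (hb : b ∈ B) : b < #B * t :=
  (Nat.div_lt_iff_lt_mul (NeZero.pos t)).1 <|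
    (hB.div_lt_residueCount hb).trans_le (card_filter_le _ _)

end IsTClosed

theorem bijOn_residueCount (r : ℕ) :
    Set.BijOn (residueCount t) {B | #B = r ∧ IsTClosed t B} {a | ∑ i, a i = r} := by
  refine Set.InvOn.bijOn ⟨fun B hB => hB.2.residueSet_residueCount,
    fun a _ => residueCount_residueSet a⟩ ?_ ?_
  · rintro B ⟨rfl, -⟩
    exact sum_residueCount B
  · rintro a rfl
    exact ⟨card_residueSet a, isTClosed_residueSet a⟩

end Residues

theorem ncard_sum_eq_choose (t r : ℕ) :
    {a : Fin t → ℕ | ∑ i, a i = r}.ncard = (r + t - 1).choose r := by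
  rw [← Nat.card_coe_set_eq]
  refine (Nat.card_congr (Sym.equivNatSumOfFintype (Fin t) r).symm).trans ?_
  rw [Nat.card_eq_fintype_card, Sym.card_sym_eq_choose, Fintype.card_fin, add_comm]

theorem StrictMono.apply_add_sub_le {n : ℕ} {g : Fin n → ℕ} (hg : StrictMono g) {i j : Fin n}
    (hij : i ≤ j) : g i + (j - i) ≤ g j := by
  have hcard := card_le_card_of_injOn g (s := Icc i j) (t := Icc (g i) (g j))
    (fun k hk => by
      simp only [coe_Icc, Set.mem_Icc] at hk ⊢
      exact ⟨hg.monotone hk.1, hg.monotone hk.2⟩)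
    hg.injective.injOn
  rw [Fin.card_Icc, Nat.card_Icc] at hcard
  have : (i : ℕ) ≤ j := hij
  have := hg.monotone hij
  omega

section Beta

variable {r : ℕ}

theorem strictAnti_beta {lam : Fin r → ℕ} (h : Antitone lam) :
    StrictAnti fun i : Fin r => lam i + (r - 1 - i) := by
  intro i j hij
  have := h hij.le
  have : (i : ℕ) < j := hij
  have := j.isLt
  dsimp only
  omega

theorem card_betaSet {lam : Fin r → ℕ} (h : Antitone lam) : #(betaSet r lam) = r := by
  rw [betaSet, card_image_of_injective _ (strictAnti_beta h).injective, card_univ,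
    Fintype.card_fin]

theorem betaSet_injOn : Set.InjOn (betaSet r) {lam | Antitone lam} := by
  intro lam₁ h₁ lam₂ h₂ heq
  have hrange := congrArg (fun B : Finset ℕ => (B : Set ℕ)) heq
  simp only [betaSet, coe_image, coe_univ, Set.image_univ] at hrange
  funext i
  simpa using congrFun (((strictAnti_beta h₁).range_inj (strictAnti_beta h₂)).1 hrange) i

theorem exists_antitone_betaSet_eq {B : Finset ℕ} (hB : #B = r) :
    ∃ lam : Fin r → ℕ, Antitone lam ∧ betaSet r lam = B := by
  set g := B.orderEmbOfFin hB
  have hgap {i j : Fin r} (hij : i ≤ j) : g i + (j - i) ≤ g j := g.strictMono.apply_add_sub_le hij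
  have hle (k : Fin r) : (k : ℕ) ≤ g k := by
    have := hgap (i := ⟨0, k.pos⟩) (j := k) (Nat.zero_le _)
    simp only at this
    omega
  refine ⟨fun i => g i.rev - i.rev, fun i j hij => ?_, ?_⟩
  · have := hgap (Fin.rev_le_rev.2 hij)
    have := hle j.rev
    dsimp only
    omega
  · have hbeta : (fun i : Fin r => g i.rev - i.rev + (r - 1 - i)) = g ∘ Fin.rev := by
      funext i
      have hrev := hle i.rev
      rw [Fin.val_rev] at hrev ⊢
      have := i.isLt
      simp only [Function.comp_apply]
      omega
    rw [betaSet, hbeta, ← image_image, image_univ_of_surjective Fin.rev_surjective,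
      image_orderEmbOfFin_univ]

end Beta

theorem bijOn_betaSet {r s t : ℕ} [NeZero t] (hs : r * t ≤ s) :
    Set.BijOn (betaSet r) {lam | IsRectPartition r s lam ∧ IsTCore r t lam}
      {B | #B = r ∧ IsTClosed t B} := by
  refine ⟨fun lam h => ⟨card_betaSet h.1.1, h.2⟩, betaSet_injOn.mono fun lam h => h.1.1, ?_⟩
  rintro B ⟨hB, hclosed⟩
  obtain ⟨lam, hanti, rfl⟩ := exists_antitone_betaSet_eq hB
  refine ⟨lam, ⟨⟨hanti, fun i => ?_⟩, hclosed⟩, rfl⟩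
  have hlt := hclosed.lt_card_mul (mem_image_of_mem _ (mem_univ i))
  rw [hB] at hlt
  exact (Nat.le_add_right _ _).trans (hlt.trans_le hs).le

theorem ncard_tcores_large_s_general (r s t : ℕ) (ht : 2 ≤ t)
    (hlarge : r * t ≤ s) :
    {lam : Fin r → ℕ | IsRectPartition r s lam ∧ IsTCore r t lam}.ncard =
      (r + t - 1).choose r := by
  have : NeZero t := ⟨by omega⟩
  rw [(bijOn_betaSet hlarge).ncard_eq, (bijOn_residueCount r).ncard_eq, ncard_sum_eq_choose]

/-- If `s ≥ rt`, the number of `t`-cores in `Par_{r,s}` is `C(r+t−1, r)`. -/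
theorem ncard_tcores_large_s (r s t : ℕ) (hr : 1 ≤ r) (hs : 1 ≤ s) (ht : 2 ≤ t)
    (hlarge : r * t ≤ s) :
    {lam : Fin r → ℕ | IsRectPartition r s lam ∧ IsTCore r t lam}.ncard =
      (r + t - 1).choose r :=
  ncard_tcores_large_s_general r s t ht hlarge
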